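/- Let c : [R₁,R₂] → (0,∞) be C¹ radial. The Herglotz condition d/dr(r/c(r)) > 0 on [R₁,R₂] holds if and only if the function κ(x) = R₂ − |x| (whose level sets are the spheres |x| = const) defines a foliation of the annulus {R₁ ≤ |x| ≤ R₂} by hypersurfaces each of which is strictly convex with respect to c^{-2}dx² viewed from outside. -/

import Mathlib

open scoped RealInnerProductSpace

/-- Christoffel symbols of the conformally Euclidean metric `c⁻² dx²` on
`EuclideanSpace ℝ (Fin n)`:
`Γᵢⱼᵏ = (1/2) c² (δⱼᵏ ∂ᵢ(c⁻²) + δᵢᵏ ∂ⱼ(c⁻²) − δᵢⱼ ∂ₖ(c⁻²))`. -/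
noncomputable def gammaConf {n : ℕ} (c : EuclideanSpace ℝ (Fin n) → ℝ)
    (x : EuclideanSpace ℝ (Fin n)) (i j k : Fin n) : ℝ :=
  (1 / 2) * (c x) ^ 2 *
    ((if j = k then (1 : ℝ) else 0) * fderiv ℝ (fun y => ((c y) ^ 2)⁻¹) x (EuclideanSpace.single i 1)
      + (if i = k then (1 : ℝ) else 0) * fderiv ℝ (fun y => ((c y) ^ 2)⁻¹) x (EuclideanSpace.single j 1)
      - (if i = j then (1 : ℝ) else 0) * fderiv ℝ (fun y => ((c y) ^ 2)⁻¹) x (EuclideanSpace.single k 1))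

/-- The second fundamental form (up to the positive normalization `1/|∇f|_{g̃}`) of the level
set of `f` through `x`, with respect to the metric `c⁻² dx²` and with normal pointing in the
direction of `∇f`, evaluated on a tangent vector `ξ`:
`II(ξ,ξ) = Σᵢⱼ (∂ᵢ∂ⱼ f − Σₖ Γᵢⱼᵏ ∂ₖ f) ξ i ξ j`, i.e. the covariant Hessian of `f`. -/
noncomputable def sffConf {n : ℕ} (c f : EuclideanSpace ℝ (Fin n) → ℝ)
    (x ξ : EuclideanSpace ℝ (Fin n)) : ℝ :=
  ∑ i, ∑ j,
    (fderiv ℝ (fun y => fderiv ℝ f y (EuclideanSpace.single j 1)) x (EuclideanSpace.single i 1)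
      - ∑ k, gammaConf c x i j k * fderiv ℝ f x (EuclideanSpace.single k 1)) * ξ i * ξ j

/-!
Write `u = c⁻²` and `f = ‖x‖²`. Contracting the Christoffel symbols with `df` and a vector
`ξ` twice gives `Σ Γᵢⱼᵏ ∂ₖf ξⁱξʲ = c² (du(ξ) df(ξ) - ½ ‖ξ‖² ⟨du, df⟩)`, while `∇²f = 2 Id`.
For `ξ` tangent to the sphere through `x` we have `df(ξ) = 2⟪x, ξ⟫ = 0` and
`⟨du, df⟩ = 2 du(x) = 2 r u'(r)`, so the second fundamental form is
`2 (1 - r c'/c) ‖ξ‖² = 2 c (r/c)' ‖ξ‖²`. As `n ≥ 2`, every sphere has nonzero tangent vectors,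
so its positivity is exactly the Herglotz condition.
-/

open EuclideanSpace

section Calculus

variable {F : Type*} [NormedAddCommGroup F] [InnerProductSpace ℝ F]

theorem fderiv_fderiv_norm_sq_apply (x v w : F) :
    fderiv ℝ (fun y => fderiv ℝ (fun z : F => ‖z‖ ^ 2) y v) x w = 2 * ⟪w, v⟫ := by
  have h : (fun y => fderiv ℝ (fun z : F => ‖z‖ ^ 2) y v) = ⇑((2 : ℝ) • innerSL ℝ v) := by
    ext y
    simp [fderiv_norm_sq_apply, real_inner_comm]
  rw [h, ContinuousLinearMap.fderiv]
  simp [real_inner_comm]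

theorem fderiv_comp_norm_apply_self {g : ℝ → ℝ} {x : F} (hx : x ≠ 0)
    (hg : DifferentiableAt ℝ g ‖x‖) :
    fderiv ℝ (fun y => g ‖y‖) x x = ‖x‖ * deriv g ‖x‖ := by
  have hnorm : DifferentiableAt ℝ (‖·‖) x := (contDiffAt_norm ℝ hx).differentiableAt one_ne_zero
  rw [show (fun y : F => g ‖y‖) = g ∘ (‖·‖) from rfl, fderiv_comp x hg hnorm]
  simp [hnorm.fderiv_norm_self]

end Calculus

section Euclidean

variable {n : ℕ}

theorem sum_apply_single_mul {ι : Type*} [Fintype ι] [DecidableEq ι]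
    (L : EuclideanSpace ℝ ι →L[ℝ] ℝ) (ξ : EuclideanSpace ℝ ι) :
    ∑ i, L (single i 1) * ξ i = L ξ := by
  conv_rhs => rw [← (EuclideanSpace.basisFun ι ℝ).sum_repr ξ]
  simp [map_sum, mul_comm]

theorem sum_gammaConf_mul (ρ : EuclideanSpace ℝ (Fin n) → ℝ) (x : EuclideanSpace ℝ (Fin n))
    (ℓ : EuclideanSpace ℝ (Fin n) →L[ℝ] ℝ) (i j : Fin n) :
    ∑ k, gammaConf ρ x i j k * ℓ (single k 1)
      = ρ x ^ 2 / 2 * (fderiv ℝ (fun y => (ρ y ^ 2)⁻¹) x (single i 1) * ℓ (single j 1)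
          + fderiv ℝ (fun y => (ρ y ^ 2)⁻¹) x (single j 1) * ℓ (single i 1)
          - (if i = j then 1 else 0) *
              ∑ k, fderiv ℝ (fun y => (ρ y ^ 2)⁻¹) x (single k 1) * ℓ (single k 1)) := by
  simp only [gammaConf]
  generalize fderiv ℝ (fun y => (ρ y ^ 2)⁻¹) x = μ
  have hk (k : Fin n) : 1 / 2 * ρ x ^ 2 * ((if j = k then 1 else 0) * μ (single i 1)
      + (if i = k then 1 else 0) * μ (single j 1) - (if i = j then 1 else 0) * μ (single k 1))
      * ℓ (single k 1) = ρ x ^ 2 / 2 * ((if j = k then μ (single i 1) * ℓ (single k 1) else 0)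
        + (if i = k then μ (single j 1) * ℓ (single k 1) else 0)
        - (if i = j then 1 else 0) * (μ (single k 1) * ℓ (single k 1))) := by
    split_ifs <;> ring
  simp only [hk, ← Finset.mul_sum, Finset.sum_add_distrib, Finset.sum_sub_distrib,
    Finset.sum_ite_eq, Finset.mem_univ, if_true]

theorem sum_sum_gammaConf_mul (ρ : EuclideanSpace ℝ (Fin n) → ℝ) (x ξ : EuclideanSpace ℝ (Fin n))
    (ℓ : EuclideanSpace ℝ (Fin n) →L[ℝ] ℝ) :
    ∑ i, ∑ j, (∑ k, gammaConf ρ x i j k * ℓ (single k 1)) * ξ i * ξ j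
      = ρ x ^ 2 * (fderiv ℝ (fun y => (ρ y ^ 2)⁻¹) x ξ * ℓ ξ - ‖ξ‖ ^ 2 / 2 *
          ∑ k, fderiv ℝ (fun y => (ρ y ^ 2)⁻¹) x (single k 1) * ℓ (single k 1)) := by
  simp only [sum_gammaConf_mul]
  generalize fderiv ℝ (fun y => (ρ y ^ 2)⁻¹) x = μ
  generalize ∑ k, μ (single k 1) * ℓ (single k 1) = S
  have hij (i j : Fin n) : ρ x ^ 2 / 2 * (μ (single i 1) * ℓ (single j 1)
      + μ (single j 1) * ℓ (single i 1) - (if i = j then 1 else 0) * S) * ξ i * ξ j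
      = ρ x ^ 2 / 2 * ((μ (single i 1) * ξ i) * (ℓ (single j 1) * ξ j)
        + (ℓ (single i 1) * ξ i) * (μ (single j 1) * ξ j)
        - (if i = j then S * ξ i ^ 2 else 0)) := by
    split_ifs with h
    · subst h; ring
    · ring
  simp only [hij, ← Finset.mul_sum, Finset.sum_add_distrib, Finset.sum_sub_distrib,
    ← Finset.sum_mul, Finset.sum_ite_eq, Finset.mem_univ, if_true, sum_apply_single_mul,
    real_norm_sq_eq]
  ring

theorem sum_sum_fderiv_fderiv_norm_sq_mul (x ξ : EuclideanSpace ℝ (Fin n)) :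
    ∑ i, ∑ j, fderiv ℝ (fun y => fderiv ℝ (fun z => ‖z‖ ^ 2) y (single j 1)) x (single i 1)
      * ξ i * ξ j = 2 * ‖ξ‖ ^ 2 := by
  simp_rw [fderiv_fderiv_norm_sq_apply, inner_single_left, PiLp.single_apply]
  simp only [map_one, mul_ite, ite_mul, mul_one, mul_zero, zero_mul, Finset.sum_ite_eq,
    Finset.mem_univ, if_true, real_norm_sq_eq, Finset.mul_sum]
  ring_nf

theorem sffConf_norm_sq (ρ : EuclideanSpace ℝ (Fin n) → ℝ) (x ξ : EuclideanSpace ℝ (Fin n)) :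
    sffConf ρ (fun y => ‖y‖ ^ 2) x ξ
      = 2 * ‖ξ‖ ^ 2 - ρ x ^ 2 * (fderiv ℝ (fun y => (ρ y ^ 2)⁻¹) x ξ * (2 * ⟪x, ξ⟫)
          - ‖ξ‖ ^ 2 * fderiv ℝ (fun y => (ρ y ^ 2)⁻¹) x x) := by
  set μ := fderiv ℝ (fun y => (ρ y ^ 2)⁻¹) x
  have hgrad (v : EuclideanSpace ℝ (Fin n)) : fderiv ℝ (fun y => ‖y‖ ^ 2) x v = 2 * ⟪x, v⟫ := by
    simp [fderiv_norm_sq_apply]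
  have hpair : ∑ k, μ (single k 1) * fderiv ℝ (fun y => ‖y‖ ^ 2) x (single k 1) = 2 * μ x := by
    simp_rw [hgrad, inner_single_right, mul_left_comm _ (2 : ℝ), ← Finset.mul_sum]
    simp [sum_apply_single_mul]
  simp only [sffConf, sub_mul, Finset.sum_sub_distrib]
  rw [sum_sum_gammaConf_mul, sum_sum_fderiv_fderiv_norm_sq_mul, hpair, hgrad]
  ring

theorem sffConf_radial_norm_sq {c : ℝ → ℝ} {x ξ : EuclideanSpace ℝ (Fin n)} (hx : x ≠ 0)
    (hc : DifferentiableAt ℝ c ‖x‖) (hc0 : c ‖x‖ ≠ 0) (hxξ : ⟪x, ξ⟫ = 0) :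
    sffConf (fun y => c ‖y‖) (fun y => ‖y‖ ^ 2) x ξ
      = 2 * c ‖x‖ * deriv (fun s => s / c s) ‖x‖ * ‖ξ‖ ^ 2 := by
  have hinv : HasDerivAt (fun s => (c s ^ 2)⁻¹)
      (-(2 * c ‖x‖ * deriv c ‖x‖) / (c ‖x‖ ^ 2) ^ 2) ‖x‖ := by
    simpa using (hc.hasDerivAt.fun_pow 2).fun_inv (pow_ne_zero 2 hc0)
  have hquot : HasDerivAt (fun s => s / c s) ((1 * c ‖x‖ - ‖x‖ * deriv c ‖x‖) / c ‖x‖ ^ 2) ‖x‖ :=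
    (hasDerivAt_id _).div hc.hasDerivAt hc0
  rw [sffConf_norm_sq, hxξ, fderiv_comp_norm_apply_self (g := fun s => (c s ^ 2)⁻¹) hx
    hinv.differentiableAt, hinv.deriv, hquot.deriv]
  field_simp
  ring

theorem exists_norm_eq_inner_eq_zero (hn : 2 ≤ n) {r : ℝ} (hr : 0 ≤ r) :
    ∃ x ξ : EuclideanSpace ℝ (Fin n), ‖x‖ = r ∧ ξ ≠ 0 ∧ ⟪x, ξ⟫ = 0 :=
  ⟨single ⟨0, by omega⟩ r, single ⟨1, by omega⟩ 1, by simp [abs_of_nonneg hr], by simp,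
    by simp [inner_single_left]⟩

end Euclidean

theorem herglotz_iff_strictly_convex_foliation_general
    {n : ℕ} (hn : 2 ≤ n) (R₁ R₂ : ℝ) (hR₁ : 0 < R₁)
    (c : ℝ → ℝ) (hc : ContDiff ℝ 1 c)
    (hcpos : ∀ r ∈ Set.Icc R₁ R₂, 0 < c r) :
    (∀ r ∈ Set.Icc R₁ R₂, 0 < deriv (fun s : ℝ => s / c s) r)
      ↔ (∀ x : EuclideanSpace ℝ (Fin n), R₁ ≤ ‖x‖ → ‖x‖ ≤ R₂ →
          ∀ ξ : EuclideanSpace ℝ (Fin n), ξ ≠ 0 → ⟪x, ξ⟫ = 0 →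
            0 < sffConf (fun y => c ‖y‖) (fun y => ‖y‖ ^ 2) x ξ) := by
  have hsff (x ξ : EuclideanSpace ℝ (Fin n)) (hx : ‖x‖ ∈ Set.Icc R₁ R₂) (hxξ : ⟪x, ξ⟫ = 0) :
      sffConf (fun y => c ‖y‖) (fun y => ‖y‖ ^ 2) x ξ
        = 2 * c ‖x‖ * deriv (fun s => s / c s) ‖x‖ * ‖ξ‖ ^ 2 :=
    sffConf_radial_norm_sq (norm_pos_iff.mp (hR₁.trans_le hx.1))
      (hc.differentiable one_ne_zero _) (hcpos _ hx).ne' hxξ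
  have hpos_iff {r : ℝ} (hr : r ∈ Set.Icc R₁ R₂) {ξ : EuclideanSpace ℝ (Fin n)} (hξ : ξ ≠ 0) :
      0 < 2 * c r * deriv (fun s => s / c s) r * ‖ξ‖ ^ 2 ↔ 0 < deriv (fun s => s / c s) r := by
    rw [mul_pos_iff_of_pos_right (by positivity),
      mul_pos_iff_of_pos_left (by linarith [hcpos r hr])]
  constructor
  · intro h x h₁ h₂ ξ hξ hxξ
    rw [hsff x ξ ⟨h₁, h₂⟩ hxξ, hpos_iff ⟨h₁, h₂⟩ hξ]
    exact h _ ⟨h₁, h₂⟩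
  · intro h r hr
    obtain ⟨x, ξ, rfl, hξ, hxξ⟩ := exists_norm_eq_inner_eq_zero hn (hR₁.le.trans hr.1)
    rw [← hpos_iff hr hξ, ← hsff x ξ hr hxξ]
    exact h x hr.1 hr.2 ξ hξ hxξ

/-- For a `C¹` radial speed `c > 0` on `[R₁, R₂]`, the Herglotz condition
`d/dr (r/c(r)) > 0` on `[R₁,R₂]` holds if and only if the level sets of `κ(x) = R₂ − |x|`
(the spheres `{|x| = const}`) foliate the annulus `{R₁ ≤ |x| ≤ R₂}` by hypersurfaces each
strictly convex w.r.t. `c⁻²dx²` viewed from outside (normal in the direction `∇(|x|²)`). -/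
theorem herglotz_iff_strictly_convex_foliation
    {n : ℕ} (hn : 2 ≤ n) (R₁ R₂ : ℝ) (hR₁ : 0 < R₁) (hR : R₁ ≤ R₂)
    (c : ℝ → ℝ) (hc : ContDiff ℝ 1 c)
    (hcpos : ∀ r ∈ Set.Icc R₁ R₂, 0 < c r) :
    (∀ r ∈ Set.Icc R₁ R₂, 0 < deriv (fun s : ℝ => s / c s) r)
      ↔ (∀ x : EuclideanSpace ℝ (Fin n), R₁ ≤ ‖x‖ → ‖x‖ ≤ R₂ →
          ∀ ξ : EuclideanSpace ℝ (Fin n), ξ ≠ 0 → ⟪x, ξ⟫ = 0 →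
            0 < sffConf (fun y => c ‖y‖) (fun y => ‖y‖ ^ 2) x ξ) :=
  herglotz_iff_strictly_convex_foliation_general hn R₁ R₂ hR₁ c hc hcpos
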